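/- For every integer n ≥ 3, the topological boundary (frontier) in ℂ of the set {wⁿ : w ∈ 𝒫_n} equals the curve {(t + (1−t) ω_n)ⁿ : t ∈ [0,1]}. -/

import Mathlib

/-- `ω_n = exp(2πi/n)`. -/
noncomputable def primRoot (n : ℕ) : ℂ := Complex.exp (2 * Real.pi * Complex.I / n)

/-- `𝒫_n`: the convex hull in `ℂ` of the `n`th roots of unity. -/
noncomputable def rootsOfUnityHull (n : ℕ) : Set ℂ :=
  convexHull ℝ (Set.range fun k : Fin n => primRoot n ^ (k : ℕ))

/-!
An `n`th root of unity `ζ` does not change `wⁿ`, and rotating by a suitable one moves any `w`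
into the sector `K` spanned by `1` and `ω_n`; there `𝒫_n` is the triangle `0, 1, ω_n`. Hence
`{wⁿ : w ∈ 𝒫_n} = [0, 1] • γ`, where `γ` is the image of the edge `[ω_n, 1]` under `w ↦ wⁿ`.

The functional `f w = Re (w (1 + ω̄_n))` is constant on that edge and bounded by this constant
on the vertices, so `f (ζ w) ≤ f w` for `w ∈ K`. Thus two points of `K` with the same `n`th
power have the same value of `f`, which forces every ray from `0` to meet `γ` exactly once; and a
compact set that every ray from `0` meets exactly once is the frontier of the star-shaped set it
bounds.
-/

open Set Topology Pointwise

section Radial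

variable {E : Type*} [AddCommGroup E] [Module ℝ E] {C : Set E}

lemma compl_Icc_smul_subset (hne : C.Nonempty) (hray : ∀ z ≠ 0, ∃ r : ℝ, 0 < r ∧ r • z ∈ C) :
    (Icc (0 : ℝ) 1 • C)ᶜ ⊆ {z | ∃ s ∈ Icc (0 : ℝ) 1, s • z ∈ C} := by
  intro z hz
  obtain ⟨c, hc⟩ := hne
  have hz0 : z ≠ 0 := by
    rintro rfl
    exact hz (mem_smul.2 ⟨0, ⟨le_rfl, zero_le_one⟩, c, hc, zero_smul _ _⟩)
  obtain ⟨r, hr, hrz⟩ := hray z hz0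
  refine ⟨r, ⟨hr.le, le_of_not_ge fun h1 => hz ?_⟩, hrz⟩
  refine mem_smul.2 ⟨r⁻¹, ⟨inv_nonneg.2 hr.le, inv_le_one_of_one_le₀ h1⟩, r • z, hrz, ?_⟩
  rw [smul_smul, inv_mul_cancel₀ hr.ne', one_smul]

lemma mem_of_mem_Icc_smul_of_smul_mem (h0 : (0 : E) ∉ C)
    (huniq : ∀ c ∈ C, ∀ r : ℝ, 0 < r → r • c ∈ C → r = 1) {z : E}
    (hz : z ∈ Icc (0 : ℝ) 1 • C) {s : ℝ} (hs : s ∈ Icc (0 : ℝ) 1) (hsz : s • z ∈ C) : z ∈ C := by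
  obtain ⟨u, hu, c, hc, rfl⟩ := mem_smul.1 hz
  rw [smul_smul] at hsz
  have hsu : 0 < s * u := by
    refine lt_of_le_of_ne (mul_nonneg hs.1 hu.1) fun h => h0 ?_
    rwa [← h, zero_smul] at hsz
  have hu1 : u = 1 := by
    nlinarith [huniq c hc _ hsu hsz, mul_nonneg (sub_nonneg.2 hs.2) hu.1, hu.2]
  rwa [hu1, one_smul]

lemma smul_notMem_Icc_smul (h0 : (0 : E) ∉ C)
    (huniq : ∀ c ∈ C, ∀ r : ℝ, 0 < r → r • c ∈ C → r = 1) {c : E} (hc : c ∈ C) {r : ℝ}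
    (hr : 1 < r) : r • c ∉ Icc (0 : ℝ) 1 • C := by
  intro hrc
  obtain ⟨u, hu, c', hc', hrc⟩ := mem_smul.1 hrc
  have hu0 : 0 < u := by
    refine lt_of_le_of_ne hu.1 ?_
    rintro rfl
    rw [zero_smul, eq_comm, smul_eq_zero] at hrc
    exact hrc.elim (fun h => by linarith) fun h => h0 (h ▸ hc)
  have : (r / u) • c ∈ C := by
    rwa [div_eq_inv_mul, mul_smul, ← hrc, smul_smul, inv_mul_cancel₀ hu0.ne', one_smul]
  have := huniq c hc _ (by positivity) this
  rw [div_eq_one_iff_eq hu0.ne'] at this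
  linarith [hu.2]

variable [TopologicalSpace E] [ContinuousSMul ℝ E]

lemma isClosed_setOf_exists_smul_mem (hC : IsClosed C) :
    IsClosed {z : E | ∃ s ∈ Icc (0 : ℝ) 1, s • z ∈ C} := by
  have : {z : E | ∃ s ∈ Icc (0 : ℝ) 1, s • z ∈ C} =
      Prod.snd '' {p : Icc (0 : ℝ) 1 × E | (p.1 : ℝ) • p.2 ∈ C} := by
    ext z
    simp
  rw [this]
  exact isClosedMap_snd_of_compactSpace _ (hC.preimage (by fun_prop))

theorem frontier_Icc_smul_eq [T2Space E] (h0 : (0 : E) ∉ C)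
    (huniq : ∀ c ∈ C, ∀ r : ℝ, 0 < r → r • c ∈ C → r = 1) (hC : IsCompact C) (hne : C.Nonempty)
    (hray : ∀ z ≠ 0, ∃ r : ℝ, 0 < r ∧ r • z ∈ C) : frontier (Icc (0 : ℝ) 1 • C) = C := by
  rw [frontier_eq_closure_inter_closure, (isCompact_Icc.smul_set hC).isClosed.closure_eq]
  refine subset_antisymm (fun z hz => ?_) fun c hc => ⟨?_, ?_⟩
  · obtain ⟨s, hs, hsz⟩ := (isClosed_setOf_exists_smul_mem hC.isClosed).closure_subset_iff.2
      (compl_Icc_smul_subset hne hray) hz.2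
    exact mem_of_mem_Icc_smul_of_smul_mem h0 huniq hz.1 hs hsz
  · exact mem_smul.2 ⟨1, ⟨zero_le_one, le_rfl⟩, c, hc, one_smul _ _⟩
  · have hcont : Continuous fun r : ℝ => r • c := continuous_id.smul continuous_const
    have hlim : Filter.Tendsto (fun r : ℝ => r • c) (𝓝[>] 1) (𝓝 c) := by
      simpa using (hcont.tendsto 1).mono_left nhdsWithin_le_nhds
    exact mem_closure_of_tendsto hlim
      (eventually_nhdsWithin_of_forall fun r hr => smul_notMem_Icc_smul h0 huniq hc hr)

end Radial

open Complex ComplexConjugate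
open scoped Real

lemma Real.cos_le_cos_of_mem_Icc {a x : ℝ} (ha : 0 ≤ a) (hx : x ∈ Icc a (2 * π - a)) :
    Real.cos x ≤ Real.cos a := by
  rcases le_or_gt x π with hxπ | hπx
  · exact Real.cos_le_cos_of_nonneg_of_le_pi ha hxπ hx.1
  · rw [← Real.cos_two_pi_sub]
    exact Real.cos_le_cos_of_nonneg_of_le_pi ha (by linarith) (by linarith [hx.2])

lemma primRoot_eq_exp (n : ℕ) : primRoot n = exp (↑(2 * π / n) * I) := by
  rw [primRoot]
  push_cast
  ring_nf

lemma primRoot_mul_conj (n : ℕ) : primRoot n * conj (primRoot n) = 1 := by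
  rw [mul_conj, primRoot_eq_exp, normSq_eq_norm_sq, norm_exp_ofReal_mul_I]
  norm_num

variable {n : ℕ}

lemma isPrimitiveRoot_primRoot (hn : n ≠ 0) : IsPrimitiveRoot (primRoot n) n :=
  isPrimitiveRoot_exp n hn

lemma cos_pi_div_pos (hn : 3 ≤ n) : 0 < Real.cos (π / n) := by
  apply Real.cos_pos_of_mem_Ioo
  constructor
  · linarith [show 0 < π / n by positivity, Real.pi_pos]
  · rw [div_lt_div_iff₀ (by positivity) (by norm_num)]
    have : (3 : ℝ) ≤ n := by exact_mod_cast hn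
    nlinarith [Real.pi_pos]

noncomputable def edgePoint (n : ℕ) (t : ℝ) : ℂ := t + (1 - t) * primRoot n

def edgeCone (n : ℕ) : Set ℂ := {w | ∃ a b : ℝ, 0 ≤ a ∧ 0 ≤ b ∧ w = a + b * primRoot n}

noncomputable def edgeFunctional (n : ℕ) : ℂ →ₗ[ℝ] ℝ :=
  reLm ∘ₗ LinearMap.mulRight ℝ (conj (1 + primRoot n))

def edgeCurve (n : ℕ) : Set ℂ := (fun t => edgePoint n t ^ n) '' Icc 0 1

lemma edgeFunctional_apply (w : ℂ) : edgeFunctional n w = (w * conj (1 + primRoot n)).re := rfl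

lemma edgeFunctional_ofReal_mul (r : ℝ) (w : ℂ) :
    edgeFunctional n (r * w) = r * edgeFunctional n w := by
  rw [← real_smul, map_smul, smul_eq_mul]

lemma edgeFunctional_exp_mul_I (x : ℝ) :
    edgeFunctional n (exp (x * I)) = 2 * Real.cos (x - π / n) * Real.cos (π / n) := by
  have h := primRoot_eq_exp n
  rw [show 2 * π / n = 2 * (π / n) by ring] at h
  simp only [edgeFunctional_apply, h, mul_re, exp_ofReal_mul_I_re, exp_ofReal_mul_I_im, map_add,
    map_one, add_re, add_im, one_re, one_im, conj_re, conj_im, Real.cos_two_mul, Real.sin_two_mul,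
    Real.cos_sub]
  ring

lemma edgeFunctional_one : edgeFunctional n 1 = 2 * Real.cos (π / n) ^ 2 := by
  simpa [sq, mul_assoc] using edgeFunctional_exp_mul_I (n := n) 0

lemma edgeFunctional_one_pos (hn : 3 ≤ n) : 0 < edgeFunctional n 1 := by
  rw [edgeFunctional_one]
  have := cos_pi_div_pos hn
  positivity

lemma edgeFunctional_primRoot : edgeFunctional n (primRoot n) = edgeFunctional n 1 := by
  simp only [edgeFunctional_apply, map_add, mul_add, primRoot_mul_conj, one_mul, map_one]
  simp [add_comm]

lemma edgeFunctional_add_mul_primRoot (a b : ℝ) :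
    edgeFunctional n (a + b * primRoot n) = (a + b) * edgeFunctional n 1 := by
  rw [map_add, ← mul_one (a : ℂ), edgeFunctional_ofReal_mul, edgeFunctional_ofReal_mul,
    edgeFunctional_primRoot, add_mul]

lemma edgeFunctional_edgePoint (t : ℝ) : edgeFunctional n (edgePoint n t) = edgeFunctional n 1 := by
  have : edgePoint n t = (t : ℂ) + ((1 - t : ℝ) : ℂ) * primRoot n := by
    rw [edgePoint]; push_cast; ring
  rw [this, edgeFunctional_add_mul_primRoot, add_sub_cancel, one_mul]

lemma edgeFunctional_le_of_pow_eq_one (hn : 3 ≤ n) {ζ : ℂ} (hζ : ζ ^ n = 1) :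
    edgeFunctional n ζ ≤ edgeFunctional n 1 := by
  have := NeZero.mk (show n ≠ 0 by omega)
  obtain ⟨_ | j, hj, rfl⟩ := (isPrimitiveRoot_primRoot (NeZero.ne n)).eq_pow_of_pow_eq_one hζ
  · rw [pow_zero]
  rw [primRoot_eq_exp, ← Complex.exp_nat_mul, ← mul_assoc, ← ofReal_natCast, ← ofReal_mul,
    edgeFunctional_exp_mul_I, edgeFunctional_one, sq, ← mul_assoc]
  gcongr
  · exact (cos_pi_div_pos hn).le
  -- `(2j + 1) π / n` is an odd multiple of `π / n`, hence at least `π / n` away from `2πℤ`.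
  apply Real.cos_le_cos_of_mem_Icc (by positivity)
  have hj' : (j : ℝ) + 2 ≤ n := by exact_mod_cast hj
  have hβ : 0 < π / n := by positivity
  rw [show ((j + 1 : ℕ) : ℝ) * (2 * π / n) - π / n = (2 * j + 1) * (π / n) by push_cast; ring,
    show 2 * π - π / n = (2 * n - 1) * (π / n) by field_simp]
  constructor <;> nlinarith

lemma ofReal_mul_mem_edgeCone {w : ℂ} (hw : w ∈ edgeCone n) {r : ℝ} (hr : 0 ≤ r) :
    (r : ℂ) * w ∈ edgeCone n := by
  obtain ⟨a, b, ha, hb, rfl⟩ := hw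
  exact ⟨r * a, r * b, mul_nonneg hr ha, mul_nonneg hr hb, by push_cast; ring⟩

lemma edgePoint_mem_edgeCone {t : ℝ} (ht : t ∈ Icc (0 : ℝ) 1) : edgePoint n t ∈ edgeCone n :=
  ⟨t, 1 - t, ht.1, sub_nonneg.2 ht.2, by rw [edgePoint]; push_cast; ring⟩

lemma exists_eq_ofReal_mul_edgePoint {w : ℂ} (hw : w ∈ edgeCone n) :
    ∃ s : ℝ, 0 ≤ s ∧ ∃ t ∈ Icc (0 : ℝ) 1, w = s * edgePoint n t := by
  obtain ⟨a, b, ha, hb, rfl⟩ := hw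
  rcases (add_nonneg ha hb).eq_or_lt with hab | hab
  · obtain ⟨rfl, rfl⟩ : a = 0 ∧ b = 0 := ⟨by linarith, by linarith⟩
    exact ⟨0, le_rfl, 0, ⟨le_rfl, zero_le_one⟩, by simp⟩
  refine ⟨a + b, hab.le, a / (a + b), ⟨by positivity, div_le_one_of_le₀ (by linarith) hab.le⟩, ?_⟩
  have : (a : ℂ) + b ≠ 0 := by exact_mod_cast hab.ne'
  rw [edgePoint]
  push_cast
  field_simp
  ring

lemma exp_mul_I_mem_edgeCone (hn : 3 ≤ n) {θ : ℝ} (hθ : θ ∈ Icc 0 (2 * π / n)) :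
    exp (θ * I) ∈ edgeCone n := by
  have hn' : (3 : ℝ) ≤ n := by exact_mod_cast hn
  have hα : 2 * π / n ≤ π := by
    rw [div_le_iff₀ (by positivity)]; nlinarith [Real.pi_pos]
  have hsin : 0 < Real.sin (2 * π / n) := by
    apply Real.sin_pos_of_pos_of_lt_pi (by positivity)
    rw [div_lt_iff₀ (by positivity)]; nlinarith [Real.pi_pos]
  -- Law of sines: `sin α • exp (θ I) = sin (α - θ) + sin θ • ω_n` for `α = 2π / n`.
  refine ⟨Real.sin (2 * π / n - θ) / Real.sin (2 * π / n), Real.sin θ / Real.sin (2 * π / n),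
    div_nonneg (Real.sin_nonneg_of_nonneg_of_le_pi (by linarith [hθ.2]) (by linarith [hθ.1]))
      hsin.le,
    div_nonneg (Real.sin_nonneg_of_nonneg_of_le_pi hθ.1 (by linarith [hθ.2])) hsin.le, ?_⟩
  apply Complex.ext <;>
  · simp only [primRoot_eq_exp, add_re, add_im, mul_re, mul_im, ofReal_re, ofReal_im,
      exp_ofReal_mul_I_re, exp_ofReal_mul_I_im, Real.sin_sub]
    field_simp
    ring

lemma exists_pow_eq_one_mul_mem_edgeCone (hn : 3 ≤ n) (w : ℂ) :
    ∃ ζ : ℂ, ζ ^ n = 1 ∧ ζ * w ∈ edgeCone n := by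
  set α := 2 * π / n
  have hα : 0 < α := by positivity
  set k := ⌊arg w / α⌋
  refine ⟨exp (↑(-(k * α)) * I), ?_, ?_⟩
  · rw [← Complex.exp_nat_mul, ← Complex.exp_int_mul_two_pi_mul_I (-k)]
    congr 1
    have : (n : ℂ) ≠ 0 := by exact_mod_cast (show n ≠ 0 by omega)
    simp only [α]
    push_cast
    field_simp
  · rw [← norm_mul_exp_arg_mul_I w, mul_left_comm, ← Complex.exp_add, ← add_mul, ← ofReal_add]
    apply ofReal_mul_mem_edgeCone _ (norm_nonneg w)
    apply exp_mul_I_mem_edgeCone hn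
    have h := Int.floor_le (arg w / α)
    have h' := Int.lt_floor_add_one (arg w / α)
    rw [le_div_iff₀ hα] at h
    rw [div_lt_iff₀ hα] at h'
    constructor <;> nlinarith

lemma edgeFunctional_mul_le (hn : 3 ≤ n) {ζ w : ℂ} (hζ : ζ ^ n = 1) (hw : w ∈ edgeCone n) :
    edgeFunctional n (ζ * w) ≤ edgeFunctional n w := by
  obtain ⟨a, b, ha, hb, rfl⟩ := hw
  have hζω : (ζ * primRoot n) ^ n = 1 := by
    rw [mul_pow, hζ, (isPrimitiveRoot_primRoot (by omega)).pow_eq_one, one_mul]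
  have expand : ζ * (a + b * primRoot n) = a * ζ + b * (ζ * primRoot n) := by ring
  rw [expand, map_add, edgeFunctional_ofReal_mul, edgeFunctional_ofReal_mul,
    edgeFunctional_add_mul_primRoot, add_mul]
  gcongr
  · exact edgeFunctional_le_of_pow_eq_one hn hζ
  · exact edgeFunctional_le_of_pow_eq_one hn hζω

lemma edgeFunctional_le_of_pow_eq_pow (hn : 3 ≤ n) {u v : ℂ} (hv : v ∈ edgeCone n)
    (huv : u ^ n = v ^ n) : edgeFunctional n u ≤ edgeFunctional n v := by
  rcases eq_or_ne v 0 with rfl | hv0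
  · rw [zero_pow (by omega), pow_eq_zero_iff (by omega)] at huv
    rw [huv]
  have hζ : (u / v) ^ n = 1 := by rw [div_pow, huv, div_self (pow_ne_zero _ hv0)]
  simpa [div_mul_cancel₀ _ hv0] using edgeFunctional_mul_le hn hζ hv

lemma rootsOfUnityHull_eq_convexHull (hn : n ≠ 0) :
    rootsOfUnityHull n = convexHull ℝ {z : ℂ | z ^ n = 1} := by
  have := NeZero.mk hn
  have hω := isPrimitiveRoot_primRoot hn
  rw [rootsOfUnityHull]
  congr 1
  ext z
  constructor
  · rintro ⟨k, rfl⟩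
    rw [mem_ofPred_eq, ← pow_mul, mul_comm, pow_mul, hω.pow_eq_one, one_pow]
  · intro hz
    obtain ⟨i, hi, rfl⟩ := hω.eq_pow_of_pow_eq_one hz
    exact ⟨⟨i, hi⟩, rfl⟩

lemma mul_mem_rootsOfUnityHull (hn : n ≠ 0) {ζ w : ℂ} (hζ : ζ ^ n = 1)
    (hw : w ∈ rootsOfUnityHull n) : ζ * w ∈ rootsOfUnityHull n := by
  rw [rootsOfUnityHull_eq_convexHull hn] at hw ⊢
  have hmaps : LinearMap.mulLeft ℝ ζ '' {z : ℂ | z ^ n = 1} ⊆ {z : ℂ | z ^ n = 1} := by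
    rintro _ ⟨z, hz, rfl⟩
    simp only [LinearMap.mulLeft_apply, mem_ofPred_eq, mul_pow, hζ, hz.out, one_mul]
  exact convexHull_mono hmaps ((LinearMap.mulLeft ℝ ζ).image_convexHull _ ▸ mem_image_of_mem _ hw)

lemma zero_mem_rootsOfUnityHull (hn : 1 < n) : (0 : ℂ) ∈ rootsOfUnityHull n := by
  rw [rootsOfUnityHull]
  have hsum : ∑ k : Fin n, primRoot n ^ (k : ℕ) = 0 := by
    rw [Fin.sum_univ_eq_sum_range (primRoot n ^ ·)]
    exact (isPrimitiveRoot_primRoot (by omega)).geom_sum_eq_zero hn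
  have := Finset.univ.centerMass_mem_convexHull (R := ℝ) (w := fun _ => 1)
    (fun _ _ => zero_le_one) (by simp; omega) (z := fun k : Fin n => primRoot n ^ (k : ℕ))
    (fun k _ => mem_range_self k)
  simpa [Finset.centerMass, hsum] using this

lemma ofReal_mul_edgePoint_mem_rootsOfUnityHull (hn : 1 < n) {s t : ℝ}
    (hs : s ∈ Icc (0 : ℝ) 1) (ht : t ∈ Icc (0 : ℝ) 1) :
    (s : ℂ) * edgePoint n t ∈ rootsOfUnityHull n := by
  have hconv : Convex ℝ (rootsOfUnityHull n) := convex_convexHull ℝ _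
  have hvertex (k : Fin n) : primRoot n ^ (k : ℕ) ∈ rootsOfUnityHull n :=
    subset_convexHull ℝ _ (mem_range_self k)
  have hedge : edgePoint n t ∈ rootsOfUnityHull n := by
    have := hconv (by simpa using hvertex ⟨0, by omega⟩) (by simpa using hvertex ⟨1, hn⟩) ht.1
      (sub_nonneg.2 ht.2) (add_sub_cancel t 1)
    simpa [edgePoint, smul_eq_mul] using this
  simpa using hconv.smul_mem_of_zero_mem (zero_mem_rootsOfUnityHull hn) hedge hs

lemma edgeFunctional_le_of_mem_rootsOfUnityHull (hn : 3 ≤ n) {w : ℂ}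
    (hw : w ∈ rootsOfUnityHull n) : edgeFunctional n w ≤ edgeFunctional n 1 := by
  refine convexHull_min ?_ (convex_halfSpace_le (edgeFunctional n).isLinear _) hw
  rintro _ ⟨k, rfl⟩
  apply edgeFunctional_le_of_pow_eq_one hn
  rw [← pow_mul, mul_comm, pow_mul, (isPrimitiveRoot_primRoot (by omega)).pow_eq_one, one_pow]

lemma isCompact_edgeCurve (n : ℕ) : IsCompact (edgeCurve n) :=
  isCompact_Icc.image (by unfold edgePoint; fun_prop)

lemma zero_notMem_edgeCurve (hn : 3 ≤ n) : (0 : ℂ) ∉ edgeCurve n := by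
  rintro ⟨t, -, ht⟩
  have h := edgeFunctional_edgePoint (n := n) t
  rw [pow_eq_zero_iff (by omega)] at ht
  rw [ht, map_zero] at h
  exact (edgeFunctional_one_pos hn).ne h

lemma image_pow_rootsOfUnityHull (hn : 3 ≤ n) :
    (fun w : ℂ => w ^ n) '' rootsOfUnityHull n = Icc (0 : ℝ) 1 • edgeCurve n := by
  ext z
  rw [mem_smul]
  constructor
  · rintro ⟨w, hw, rfl⟩
    obtain ⟨ζ, hζ, hζw⟩ := exists_pow_eq_one_mul_mem_edgeCone hn w
    obtain ⟨s, hs, t, ht, hst⟩ := exists_eq_ofReal_mul_edgePoint hζw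
    have hs1 : s ≤ 1 := by
      have := edgeFunctional_le_of_mem_rootsOfUnityHull hn
        (mul_mem_rootsOfUnityHull (by omega) hζ hw)
      rw [hst, edgeFunctional_ofReal_mul, edgeFunctional_edgePoint] at this
      exact (mul_le_iff_le_one_left (edgeFunctional_one_pos hn)).1 this
    refine ⟨s ^ n, ⟨by positivity, pow_le_one₀ hs hs1⟩, _, ⟨t, ht, rfl⟩, ?_⟩
    rw [real_smul, ofReal_pow, ← mul_pow, ← hst, mul_pow, hζ, one_mul]
  · rintro ⟨u, hu, _, ⟨t, ht, rfl⟩, rfl⟩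
    have hs : u ^ (n⁻¹ : ℝ) ∈ Icc (0 : ℝ) 1 :=
      ⟨Real.rpow_nonneg hu.1 _, Real.rpow_le_one hu.1 hu.2 (by positivity)⟩
    refine ⟨_, ofReal_mul_edgePoint_mem_rootsOfUnityHull (by omega) hs ht, ?_⟩
    dsimp only
    rw [mul_pow, ← ofReal_pow, Real.rpow_inv_natCast_pow hu.1 (by omega), real_smul]

lemma exists_pos_smul_mem_edgeCurve (hn : 3 ≤ n) {z : ℂ} (hz : z ≠ 0) :
    ∃ r : ℝ, 0 < r ∧ r • z ∈ edgeCurve n := by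
  obtain ⟨v, rfl⟩ := IsAlgClosed.exists_pow_nat_eq z (by omega : 0 < n)
  obtain ⟨ζ, hζ, hζv⟩ := exists_pow_eq_one_mul_mem_edgeCone hn v
  obtain ⟨s, hs, t, ht, hst⟩ := exists_eq_ofReal_mul_edgePoint hζv
  have hζv0 : ζ * v ≠ 0 := mul_ne_zero (by rintro rfl; simp [zero_pow (by omega : n ≠ 0)] at hζ)
    (by rintro rfl; simp [zero_pow (by omega : n ≠ 0)] at hz)
  have hs0 : s ≠ 0 := by rintro rfl; simp [hst] at hζv0
  refine ⟨(s ^ n)⁻¹, by positivity, t, ht, ?_⟩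
  rw [real_smul, ← one_mul (v ^ n), ← hζ, ← mul_pow, hst, mul_pow, ← mul_assoc, ofReal_inv,
    ofReal_pow, inv_mul_cancel₀ (by exact_mod_cast pow_ne_zero n hs0), one_mul]

lemma eq_one_of_smul_mem_edgeCurve (hn : 3 ≤ n) {c : ℂ} (hc : c ∈ edgeCurve n) {r : ℝ}
    (hr : 0 < r) (hrc : r • c ∈ edgeCurve n) : r = 1 := by
  obtain ⟨t₁, ht₁, rfl⟩ := hc
  obtain ⟨t₂, ht₂, h : edgePoint n t₂ ^ n = r • edgePoint n t₁ ^ n⟩ := hrc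
  obtain ⟨q, hq, hqn⟩ : ∃ q : ℝ, 0 ≤ q ∧ q ^ n = r :=
    ⟨_, Real.rpow_nonneg hr.le _, Real.rpow_inv_natCast_pow hr.le (by omega)⟩
  have hpow : (q * edgePoint n t₁) ^ n = edgePoint n t₂ ^ n := by
    rw [h, mul_pow, ← ofReal_pow, hqn, real_smul]
  have heq := le_antisymm
    (edgeFunctional_le_of_pow_eq_pow hn (edgePoint_mem_edgeCone ht₂) hpow)
    (edgeFunctional_le_of_pow_eq_pow hn (ofReal_mul_mem_edgeCone (edgePoint_mem_edgeCone ht₁) hq)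
      hpow.symm)
  rw [edgeFunctional_ofReal_mul, edgeFunctional_edgePoint, edgeFunctional_edgePoint,
    mul_eq_right₀ (edgeFunctional_one_pos hn).ne'] at heq
  rw [← hqn, heq, one_pow]

/-- For `n ≥ 3`, the topological boundary in `ℂ` of `{wⁿ : w ∈ 𝒫_n}` is the curve
`{(t + (1-t) ω_n)ⁿ : t ∈ [0,1]}`. -/
theorem frontier_power_image_of_polygon {n : ℕ} (hn : 3 ≤ n) :
    frontier ((fun w : ℂ => w ^ n) '' rootsOfUnityHull n) =
      (fun t : ℝ => ((t : ℂ) + (1 - (t : ℂ)) * primRoot n) ^ n) '' Set.Icc (0 : ℝ) 1 := by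
  rw [image_pow_rootsOfUnityHull hn]
  exact frontier_Icc_smul_eq (zero_notMem_edgeCurve hn)
    (fun _ hc _ hr hrc => eq_one_of_smul_mem_edgeCurve hn hc hr hrc) (isCompact_edgeCurve n)
    ((nonempty_Icc.2 zero_le_one).image _) (fun _ hz => exists_pos_smul_mem_edgeCurve hn hz)
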